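/- In the setting of the previous statement, the operator I + 𝒜 is surjective onto V × H; equivalently, for every f ∈ H' there exists a unique z ∈ V with (M + A + D) z = f, where M : V → V' is the bounded coercive extension of the Riesz map of H restricted to V. Hence 𝒜 is maximal monotone on V × H. -/

import Mathlib

open scoped ComplexInnerProductSpace

/-- In the setting of Statement 7 (`V ↪ H` Hilbert spaces, `A` the
canonical isomorphism of `V`, `D` bounded skew, `M` induced by the `H` inner product,
so that the form `⟨(M+A+D)z, φ⟩ = ⟨ιz, ιφ⟩_H + ⟨z,φ⟩_V + d(z,φ)` is bounded and
coercive on `V`), the operator `I + 𝒜` is surjective onto `V × H`; equivalently, for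
every `f ∈ H'` (represented via Riesz by `w ∈ H`) there exists a unique `z ∈ V` with
`(M + A + D) z = f`.  Hence `𝒜` is maximal monotone on `V × H`. -/
theorem stmt8
    (V H : Type*)
    [NormedAddCommGroup V] [InnerProductSpace ℂ V] [CompleteSpace V]
    [NormedAddCommGroup H] [InnerProductSpace ℂ H] [CompleteSpace H]
    (ι : V →L[ℂ] H) (hdense : DenseRange ι) (hinj : Function.Injective ι)
    -- the bounded skew form `d`, sesquilinear in the same convention as `⟪·,·⟫`:
    (d : V → V → ℂ)
    (hadd1 : ∀ u u' v, d (u + u') v = d u v + d u' v)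
    (hsmul1 : ∀ (c : ℂ) u v, d (c • u) v = (starRingEnd ℂ) c * d u v)
    (hadd2 : ∀ u v v', d u (v + v') = d u v + d u v')
    (hsmul2 : ∀ (c : ℂ) u v, d u (c • v) = c * d u v)
    (C : ℝ) (hbdd : ∀ u v, ‖d u v‖ ≤ C * ‖u‖ * ‖v‖)
    (hskew : ∀ z : V, (d z z).re = 0) :
    -- `(M + A + D) z = f` is uniquely solvable for every `f ∈ H'`:
    (∀ w : H, ∃! z : V,
      ∀ φ : V, (⟪ι z, ι φ⟫ : ℂ) + (⟪z, φ⟫ : ℂ) + d z φ = ⟪w, ι φ⟫) ∧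
    -- equivalently, `I + 𝒜` is onto `V × H`: given `(f, g) ∈ V × H` there is
    -- `(y, z)` in the domain of `𝒜`, with `w = M⁻¹(Ay + Dz)`, such that
    -- `(y, z) + 𝒜(y, z) = (f, g)`:
    (∀ (f : V) (g : H), ∃ (y z : V) (w : H),
      (∀ φ : V, (⟪y, φ⟫ : ℂ) + d z φ = ⟪w, ι φ⟫) ∧
      y - z = f ∧ ι z + w = g) := by
  classical
  -- a uniform bound constant for the full form
  set C' : ℝ := ‖ι‖ * ‖ι‖ + 1 + max C 0 with hC'def
  have hC'pos : 0 ≤ C' := by positivity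
  have hbdd' : ∀ u v : V, ‖(⟪ι u, ι v⟫ : ℂ) + ⟪u, v⟫ + d u v‖ ≤ C' * ‖u‖ * ‖v‖ := by
    intro u v
    have h1 : ‖(⟪ι u, ι v⟫ : ℂ)‖ ≤ (‖ι‖ * ‖u‖) * (‖ι‖ * ‖v‖) := by
      calc ‖(⟪ι u, ι v⟫ : ℂ)‖ ≤ ‖ι u‖ * ‖ι v‖ := norm_inner_le_norm _ _
        _ ≤ (‖ι‖ * ‖u‖) * (‖ι‖ * ‖v‖) := by
            gcongr <;> [exact ι.le_opNorm u; exact ι.le_opNorm v]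
    have h2 : ‖(⟪u, v⟫ : ℂ)‖ ≤ ‖u‖ * ‖v‖ := norm_inner_le_norm _ _
    have h3 : ‖d u v‖ ≤ max C 0 * ‖u‖ * ‖v‖ := by
      refine (hbdd u v).trans ?_
      have : (0:ℝ) ≤ ‖u‖ * ‖v‖ := by positivity
      nlinarith [le_max_left C 0]
    calc ‖(⟪ι u, ι v⟫ : ℂ) + ⟪u, v⟫ + d u v‖
        ≤ ‖(⟪ι u, ι v⟫ : ℂ) + ⟪u, v⟫‖ + ‖d u v‖ := norm_add_le _ _
      _ ≤ (‖(⟪ι u, ι v⟫ : ℂ)‖ + ‖(⟪u, v⟫ : ℂ)‖) + ‖d u v‖ := by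
          gcongr; exact norm_add_le _ _
      _ ≤ ((‖ι‖ * ‖u‖) * (‖ι‖ * ‖v‖) + ‖u‖ * ‖v‖) + max C 0 * ‖u‖ * ‖v‖ := by
          gcongr
      _ = C' * ‖u‖ * ‖v‖ := by rw [hC'def]; ring
  -- the form as a family of continuous linear functionals
  let B : V → V →L[ℂ] ℂ := fun z =>
    LinearMap.mkContinuous
      { toFun := fun φ => (⟪ι z, ι φ⟫ : ℂ) + ⟪z, φ⟫ + d z φ
        map_add' := by
          intro φ ψ
          simp only [map_add, inner_add_right, hadd2]
          ring
        map_smul' := by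
          intro c φ
          simp only [map_smul, inner_smul_right, hsmul2, RingHom.id_apply, smul_eq_mul]
          ring }
      (C' * ‖z‖)
      (fun φ => by simpa [mul_assoc] using hbdd' z φ)
  have hBapply : ∀ z φ : V, B z φ = (⟪ι z, ι φ⟫ : ℂ) + ⟪z, φ⟫ + d z φ := fun z φ => rfl
  have hBnorm : ∀ z : V, ‖B z‖ ≤ C' * ‖z‖ := fun z =>
    LinearMap.mkContinuous_norm_le _ (by positivity) _
  -- the associated operator T
  let Tl : V →ₗ[ℂ] V :=
    { toFun := fun z => (InnerProductSpace.toDual ℂ V).symm (B z)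
      map_add' := by
        intro z z'
        have : B (z + z') = B z + B z' := by
          ext φ
          simp only [hBapply, map_add, inner_add_left, hadd1, ContinuousLinearMap.add_apply]
          ring
        show (InnerProductSpace.toDual ℂ V).symm (B (z + z')) =
          (InnerProductSpace.toDual ℂ V).symm (B z) + (InnerProductSpace.toDual ℂ V).symm (B z')
        rw [this, map_add]
      map_smul' := by
        intro c z
        have : B (c • z) = (starRingEnd ℂ) c • B z := by
          ext φ
          simp only [hBapply, map_smul, inner_smul_left, hsmul1,
            ContinuousLinearMap.smul_apply, smul_eq_mul]
          ring
        show (InnerProductSpace.toDual ℂ V).symm (B (c • z)) =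
          c • (InnerProductSpace.toDual ℂ V).symm (B z)
        rw [this, LinearIsometryEquiv.map_smulₛₗ]
        simp }
  have hTlnorm : ∀ z : V, ‖Tl z‖ ≤ C' * ‖z‖ := by
    intro z
    simpa [Tl, LinearIsometryEquiv.norm_map] using hBnorm z
  let T : V →L[ℂ] V := Tl.mkContinuous C' hTlnorm
  have hT : ∀ z φ : V, (⟪T z, φ⟫ : ℂ) = B z φ := by
    intro z φ
    have : InnerProductSpace.toDual ℂ V (T z) = B z := by
      simp [T, Tl, LinearMap.mkContinuous_apply]
    rw [← InnerProductSpace.toDual_apply_apply, this]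
  -- coercivity and the lower bound
  have hcoer : ∀ z : V, ‖z‖ ^ 2 ≤ (⟪T z, z⟫ : ℂ).re := by
    intro z
    rw [hT, hBapply]
    have h1 : (⟪ι z, ι z⟫ : ℂ).re = ‖ι z‖ ^ 2 := by
      simpa using inner_self_eq_norm_sq (𝕜 := ℂ) (ι z)
    have h2 : (⟪z, z⟫ : ℂ).re = ‖z‖ ^ 2 := by
      simpa using inner_self_eq_norm_sq (𝕜 := ℂ) z
    have h3 := hskew z
    simp only [Complex.add_re, h1, h2, h3]
    nlinarith [norm_nonneg (ι z)]
  have hlow : ∀ z : V, ‖z‖ ≤ ‖T z‖ := by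
    intro z
    rcases eq_or_ne z 0 with rfl | hz
    · simp
    · have h1 : ‖z‖ ^ 2 ≤ ‖T z‖ * ‖z‖ := by
        calc ‖z‖ ^ 2 ≤ (⟪T z, z⟫ : ℂ).re := hcoer z
          _ ≤ ‖(⟪T z, z⟫ : ℂ)‖ := Complex.re_le_norm _
          _ ≤ ‖T z‖ * ‖z‖ := norm_inner_le_norm _ _
      have hzpos : 0 < ‖z‖ := norm_pos_iff.mpr hz
      nlinarith
  have hTinj : Function.Injective T := by
    intro z z' h
    have : ‖z - z'‖ ≤ ‖T (z - z')‖ := hlow _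
    rw [map_sub, h, sub_self, norm_zero] at this
    have := le_antisymm this (norm_nonneg _)
    rwa [norm_eq_zero, sub_eq_zero] at this
  -- surjectivity of T
  have hTsurj : Function.Surjective T := by
    have hanti : AntilipschitzWith 1 T :=
      ContinuousLinearMap.antilipschitz_of_bound T (fun z => by simpa using hlow z)
    have hclosed : IsClosed (Set.range T) := hanti.isClosed_range T.uniformContinuous
    have hKclosed : IsClosed ((LinearMap.range (T : V →ₗ[ℂ] V) : Submodule ℂ V) : Set V) := by
      have : ((LinearMap.range (T : V →ₗ[ℂ] V) : Submodule ℂ V) : Set V) = Set.range T := by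
        ext x; simp [LinearMap.mem_range]
      rwa [this]
    haveI : CompleteSpace (LinearMap.range (T : V →ₗ[ℂ] V) : Submodule ℂ V) := hKclosed.completeSpace_coe
    have horth : (LinearMap.range (T : V →ₗ[ℂ] V) : Submodule ℂ V)ᗮ = ⊥ := by
      rw [Submodule.eq_bot_iff]
      intro u hu
      have h0 : (⟪T u, u⟫ : ℂ) = 0 :=
        (Submodule.mem_orthogonal _ u).mp hu (T u) (LinearMap.mem_range_self _ u)
      have h1 := hcoer u
      rw [h0] at h1
      simp only [Complex.zero_re] at h1
      have : ‖u‖ = 0 := by nlinarith [norm_nonneg u]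
      exact norm_eq_zero.mp this
    have htop : (LinearMap.range (T : V →ₗ[ℂ] V) : Submodule ℂ V) = ⊤ :=
      Submodule.orthogonal_eq_bot_iff.mp horth
    intro v
    have : v ∈ (LinearMap.range (T : V →ₗ[ℂ] V) : Submodule ℂ V) := htop ▸ Submodule.mem_top
    exact this
  -- the key unique-solvability statement
  have key : ∀ L : V →L[ℂ] ℂ, ∃! z : V,
      ∀ φ : V, (⟪ι z, ι φ⟫ : ℂ) + ⟪z, φ⟫ + d z φ = L φ := by
    intro L
    obtain ⟨z, hz⟩ := hTsurj ((InnerProductSpace.toDual ℂ V).symm L)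
    refine ⟨z, fun φ => ?_, fun z' hz' => ?_⟩
    · rw [← hBapply, ← hT, hz]
      rw [← InnerProductSpace.toDual_apply_apply]
      simp
    · apply hTinj
      have hB' : B z' = L := by
        ext φ; rw [hBapply]; exact hz' φ
      have hTz' : T z' = (InnerProductSpace.toDual ℂ V).symm L := by
        have : (T z' : V) = (InnerProductSpace.toDual ℂ V).symm (B z') := rfl
        rw [this, hB']
      rw [hTz', hz]
  constructor
  · -- part 1
    intro w
    obtain ⟨z, hz, hu⟩ := key (((InnerProductSpace.toDual ℂ H) w).comp ι)
    refine ⟨z, fun φ => ?_, fun z' h => hu z' (fun φ => ?_)⟩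
    · simpa using hz φ
    · simpa using h φ
  · -- part 2
    intro f g
    obtain ⟨z, hz, -⟩ := key
      ((((InnerProductSpace.toDual ℂ H) g).comp ι) - (InnerProductSpace.toDual ℂ V) f)
    refine ⟨f + z, z, g - ι z, fun φ => ?_, by abel, by abel⟩
    have h := hz φ
    simp only [ContinuousLinearMap.sub_apply, ContinuousLinearMap.comp_apply,
      InnerProductSpace.toDual_apply_apply] at h
    rw [inner_add_left, inner_sub_left]
    linear_combination h
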